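/- arXiv:2307.09394 — 8 statements merged into one kernel-verified Lean document; each statement's English description precedes it below -/
import Mathlib

section
/- Let R be a normal domain, p a height-one prime ideal of R, ν_p the discrete valuation associated to the localization R_p, and f ∈ R, r ≥ 1. Then ν_p(f) ≥ r if and only if the ideal quotient (p^r : ⟨f⟩) is not contained in p. -/
/-- Let `R` be a normal (integrally closed Noetherian) domain, `p` a height-one prime
ideal of `R`, and `f ∈ R`, `r ≥ 1`. The localization `R_p` is a discrete valuation ring
and `ν_p(f) ≥ r` means that `f` lies in the `r`-th power of the maximal ideal `p R_p`.
Then `ν_p(f) ≥ r` if and only if the ideal quotient `(p^r : ⟨f⟩)` is not contained in `p`. -/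
theorem valuation_ge_iff_colon_not_le {R : Type*} [CommRing R] [IsDomain R]
    [IsNoetherianRing R] [IsIntegrallyClosed R]
    (p : Ideal R) (hp : p.IsPrime) (hp0 : p ≠ ⊥)
    (hht : ∀ q : Ideal R, q.IsPrime → q < p → q = ⊥)
    (f : R) (r : ℕ) (hr : 1 ≤ r) :
    algebraMap R (Localization.AtPrime p) f ∈
        (p.map (algebraMap R (Localization.AtPrime p))) ^ r ↔
      ¬ Submodule.colon (p ^ r) (Ideal.span {f}) ≤ p := by
  haveI := hp
  have hinj : Function.Injective (algebraMap R (Localization.AtPrime p)) :=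
    IsLocalization.injective _ p.primeCompl_le_nonZeroDivisors
  rw [← Ideal.map_pow, SetLike.not_le_iff_exists]
  constructor
  · intro hf
    rw [IsLocalization.mem_map_algebraMap_iff p.primeCompl] at hf
    obtain ⟨⟨a, s⟩, h⟩ := hf
    refine ⟨(s : R), ?_, s.2⟩
    have hsf : (s : R) * f = (a : R) := by
      apply hinj
      simpa [map_mul, mul_comm] using h
    rw [Ideal.mem_colon_span_singleton, hsf]
    exact a.2
  · rintro ⟨s, hs, hsp⟩
    rw [Ideal.mem_colon_span_singleton] at hs
    rw [IsLocalization.mem_map_algebraMap_iff p.primeCompl]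
    exact ⟨⟨⟨s * f, hs⟩, ⟨s, hsp⟩⟩, by simp [map_mul, mul_comm]⟩
end

section
/- Let I be a 0-dimensional ideal in K[x_1,...,x_n], L an extension field of K, and a ∈ K[x_1,...,x_n]/I. Under the canonical K-algebra homomorphism φ : K[x_1,...,x_n]/I → L[x_1,...,x_n]/I·L[x_1,...,x_n], the minimal polynomial of a over K equals the minimal polynomial of φ(a) over L. -/
/-!
The canonical map `L[x]/I·L[x] → L ⊗_K (K[x]/I)` sends `φ(a)` to `1 ⊗ a`. Since `L` is flat over
`K`, the `K`-linearly independent powers `1, a, ..., a^(d-1)`, `d = deg μ_a`, stay `L`-linearly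
independent in `L ⊗_K (K[x]/I)`; so the minimal polynomial of `1 ⊗ a` over `L`, which divides `μ_a`,
has degree `d` and equals `μ_a`. The minimal polynomial of `φ(a)` divides `μ_a` and is divisible by
that of its image `1 ⊗ a`.
-/

open Polynomial TensorProduct

theorem le_natDegree_minpoly_of_linearIndependent_pow {L B : Type*} [Field L] [Ring B]
    [Algebra L B] {x : B} (hx : IsIntegral L x) {m : ℕ}
    (hind : LinearIndependent L fun i : Fin m => x ^ (i : ℕ)) :
    m ≤ (minpoly L x).natDegree := by
  classical
  have hspan : Set.range (fun i : Fin m => x ^ (i : ℕ)) ≤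
      Submodule.span L (Set.range fun i : Fin (minpoly L x).natDegree => x ^ (i : ℕ)) := by
    rintro _ ⟨i, rfl⟩
    exact hx.mem_span_pow ⟨X ^ (i : ℕ), by simp⟩
  have hcard := linearIndependent_le_span' _ hind _ hspan
  rw [Cardinal.mk_fin, Nat.cast_le] at hcard
  exact hcard.trans ((Fintype.card_range_le _).trans (Fintype.card_fin _).le)

theorem minpoly_one_tmul {K L A : Type*} [Field K] [Field L] [Algebra K L] [Ring A] [Algebra K A]
    {a : A} (ha : IsIntegral K a) :
    minpoly L ((1 : L) ⊗ₜ[K] a) = (minpoly K a).map (algebraMap K L) := by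
  have hint : IsIntegral L ((1 : L) ⊗ₜ[K] a) := ha.tmul 1
  have hroot : aeval ((1 : L) ⊗ₜ[K] a) ((minpoly K a).map (algebraMap K L)) = 0 := by
    rw [aeval_map_algebraMap, ← Algebra.TensorProduct.includeRight_apply, aeval_algHom_apply,
      minpoly.aeval, map_zero]
  have hind : LinearIndependent L fun i : Fin (minpoly K a).natDegree =>
      ((1 : L) ⊗ₜ[K] a) ^ (i : ℕ) := by
    simpa [Algebra.TensorProduct.tmul_pow] using
      Module.Flat.linearIndependent_one_tmul (S := L) (linearIndependent_pow a)
  refine (eq_of_monic_of_dvd_of_natDegree_le (minpoly.monic hint) ((minpoly.monic ha).map _)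
    (minpoly.dvd L _ hroot) ?_).symm
  rw [natDegree_map]
  exact le_natDegree_minpoly_of_linearIndependent_pow hint hind

section

variable {K L σ : Type*} [CommRing K] [CommRing L] [Algebra K L] (I : Ideal (MvPolynomial σ K))

noncomputable def extendedQuotientToTensor :
    MvPolynomial σ L ⧸ I.map (MvPolynomial.map (algebraMap K L)) →ₐ[L]
      L ⊗[K] (MvPolynomial σ K ⧸ I) :=
  let F := (Algebra.TensorProduct.map (AlgHom.id L L) (Ideal.Quotient.mkₐ K I)).comp
    (MvPolynomial.algebraTensorAlgEquiv K L).symm.toAlgHom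
  have hI : I.map (MvPolynomial.map (algebraMap K L)) ≤ RingHom.ker F :=
    Ideal.map_le_iff_le_comap.2 fun p hp => by
      simp [F, Ideal.Quotient.eq_zero_iff_mem.2 hp]
  Ideal.Quotient.liftₐ _ F fun _ hp => RingHom.mem_ker.1 (hI hp)

theorem extendedQuotientToTensor_quotientMap (a : MvPolynomial σ K ⧸ I) :
    extendedQuotientToTensor I (Ideal.quotientMap _ (MvPolynomial.map (algebraMap K L))
      Ideal.le_comap_map a) = 1 ⊗ₜ a := by
  obtain ⟨p, rfl⟩ := Ideal.Quotient.mk_surjective a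
  change (extendedQuotientToTensor I).comp (Ideal.Quotient.mkₐ L _) (MvPolynomial.map _ p) = _
  rw [extendedQuotientToTensor, Ideal.Quotient.liftₐ_comp]
  simp

end

/-- Let `I` be a 0-dimensional ideal in `K[x_1,...,x_n]` (i.e. the quotient is a
finite-dimensional `K`-vector space), `L` a field extension of `K`, and
`a ∈ K[x_1,...,x_n]/I`. Under the canonical homomorphism
`φ : K[x_1,...,x_n]/I → L[x_1,...,x_n]/I·L[x_1,...,x_n]`, the minimal polynomial of `a`
over `K` equals the minimal polynomial of `φ(a)` over `L`. -/
theorem minpoly_eq_minpoly_of_baseChange {K L : Type*} [Field K] [Field L] [Algebra K L]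
    {n : ℕ} (I : Ideal (MvPolynomial (Fin n) K))
    (hfin : FiniteDimensional K (MvPolynomial (Fin n) K ⧸ I))
    (a : MvPolynomial (Fin n) K ⧸ I) :
    (minpoly K a).map (algebraMap K L) =
      minpoly L
        (Ideal.quotientMap (I.map (MvPolynomial.map (algebraMap K L)))
          (MvPolynomial.map (algebraMap K L)) Ideal.le_comap_map a) := by
  have ha : IsIntegral K a := .of_finite K a
  -- the map of the statement, bundled as a `K`-algebra hom (definitionally equal)
  let φ := Ideal.quotientMapₐ (I.map (MvPolynomial.map (algebraMap K L)))
    (MvPolynomial.mapAlgHom (Algebra.ofId K L)) Ideal.le_comap_map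
  have hroot : aeval (φ a) ((minpoly K a).map (algebraMap K L)) = 0 := by
    rw [aeval_map_algebraMap]
    exact minpoly.aeval_algHom _ φ a
  have hdvd_map : minpoly L (φ a) ∣ (minpoly K a).map (algebraMap K L) := minpoly.dvd L _ hroot
  have hmap_dvd : (minpoly K a).map (algebraMap K L) ∣ minpoly L (φ a) := by
    rw [← minpoly_one_tmul ha, ← extendedQuotientToTensor_quotientMap]
    exact minpoly.dvd L _ (minpoly.aeval_algHom _ _ _)
  exact eq_of_monic_of_associated ((minpoly.monic ha).map _)
    (minpoly.monic ⟨_, (minpoly.monic ha).map _, hroot⟩) (associated_of_dvd_dvd hmap_dvd hdvd_map)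
end

section
/- The set of all separable elements of a 0-dimensional affine K-algebra R is a K-subalgebra of R. -/
/-!
The subalgebra generated by separable elements has vanishing Kähler differentials: if `f` is the
separable minimal polynomial of `a`, then `0 = d(f(a)) = f'(a) da` and `f'(a)` is a unit. So it is
formally unramified, hence a finite product of finite separable field extensions of `K`, and an
element of such a product is killed by a common separable multiple of the minimal polynomials of
its components.
-/

open Polynomial

namespace Polynomial

variable {K : Type*} [Field K]

theorem Separable.exists_separable_dvd_and_dvd {p q : K[X]} (hp : p.Separable)
    (hq : q.Separable) : ∃ r : K[X], r.Separable ∧ p ∣ r ∧ q ∣ r := by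
  classical
  obtain ⟨q₁, hq₁⟩ := gcd_dvd_right p q
  have hq₁q : q₁ ∣ q := ⟨_, hq₁.trans (mul_comm _ _)⟩
  -- a common irreducible factor `z` of `p` and `q₁` would make `z * z` divide `q`
  have hcop : IsCoprime p q₁ := by
    refine isCoprime_of_irreducible_dvd (fun h => hp.ne_zero h.1) fun z hz hzp hzq₁ => ?_
    have hzg : z ∣ gcd p q := dvd_gcd hzp (hzq₁.trans hq₁q)
    exact hz.not_isUnit (hq.squarefree z (hq₁ ▸ mul_dvd_mul hzg hzq₁))
  refine ⟨p * q₁, hp.mul (hq.of_dvd hq₁q) hcop, dvd_mul_right _ _, ?_⟩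
  rw [hq₁]
  exact mul_dvd_mul (gcd_dvd_left p q) dvd_rfl

theorem exists_separable_forall_dvd {ι : Type*} (s : Finset ι) {f : ι → K[X]}
    (hf : ∀ i ∈ s, (f i).Separable) : ∃ r : K[X], r.Separable ∧ ∀ i ∈ s, f i ∣ r := by
  classical
  induction s using Finset.induction_on with
  | empty => exact ⟨1, separable_one, by simp⟩
  | insert j s _ ih =>
    obtain ⟨r, hr, hdvd⟩ := ih fun i hi => hf i (Finset.mem_insert_of_mem hi)
    obtain ⟨r', hr', hjr', hrr'⟩ :=
      (hf j (Finset.mem_insert_self j s)).exists_separable_dvd_and_dvd hr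
    refine ⟨r', hr', fun i hi => ?_⟩
    rcases Finset.mem_insert.mp hi with rfl | hi
    · exact hjr'
    · exact (hdvd i hi).trans hrr'

end Polynomial

theorem IsSeparable.pi {K ι : Type*} [Field K] [Finite ι] {B : ι → Type*} [∀ i, Ring (B i)]
    [∀ i, Algebra K (B i)] {x : Π i, B i} (hx : ∀ i, IsSeparable K (x i)) :
    IsSeparable K x := by
  have := Fintype.ofFinite ι
  obtain ⟨r, hr, hdvd⟩ := exists_separable_forall_dvd Finset.univ fun i _ => hx i
  refine hr.of_dvd (minpoly.dvd K x ?_)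
  ext i
  obtain ⟨c, hc⟩ := hdvd i (Finset.mem_univ i)
  rw [aeval_pi_apply₂, Pi.zero_apply, hc, map_mul, minpoly.aeval, zero_mul]

theorem Derivation.map_eq_zero_of_isSeparable {R A M : Type*} [CommRing R] [CommRing A]
    [Algebra R A] [AddCommGroup M] [Module A M] [Module R M] [IsScalarTower R A M]
    (D : Derivation R A M) {x : A} (hx : IsSeparable R x) : D x = 0 := by
  obtain ⟨u, v, huv⟩ := hx
  have hunit : aeval x v * aeval x (derivative (minpoly R x)) = 1 := by
    simpa using congrArg (aeval x) huv
  calc D x = (aeval x v * aeval x (derivative (minpoly R x))) • D x := by rw [hunit, one_smul]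
    _ = aeval x v • D (aeval x (minpoly R x)) := by rw [D.map_aeval, mul_smul]
    _ = 0 := by rw [minpoly.aeval, D.map_zero, smul_zero]

theorem Algebra.FormallyUnramified.of_adjoin_eq_top_of_isSeparable {R A : Type*} [CommRing R]
    [CommRing A] [Algebra R A] {s : Set A} (hs : Algebra.adjoin R s = ⊤)
    (hsep : ∀ x ∈ s, IsSeparable R x) : Algebra.FormallyUnramified R A := by
  have hD : KaehlerDifferential.D R A = 0 := Derivation.ext_of_adjoin_eq_top s hs
    fun x hx => (KaehlerDifferential.D R A).map_eq_zero_of_isSeparable (hsep x hx)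
  have hspan := KaehlerDifferential.span_range_derivation R A
  rw [hD, Derivation.coe_zero, Set.range_zero, Submodule.span_zero_singleton] at hspan
  exact ⟨(Submodule.subsingleton_iff A).mp (subsingleton_of_bot_eq_top hspan)⟩

theorem Algebra.IsSeparable.of_formallyUnramified {K A : Type*} [Field K] [CommRing A]
    [Algebra K A] [Algebra.EssFiniteType K A] [Algebra.FormallyUnramified K A] :
    Algebra.IsSeparable K A := by
  have := Algebra.FormallyUnramified.finite_of_free K A
  have : IsArtinianRing A := isArtinian_of_tower K inferInstance
  have := Algebra.FormallyUnramified.isReduced_of_field K A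
  let e := (IsArtinianRing.equivPi A).restrictScalars K
  refine ⟨fun x => e.isSeparable_iff.mp (IsSeparable.pi fun m => ?_)⟩
  let := Ideal.Quotient.field m.asIdeal
  have := Algebra.FormallyUnramified.isSeparable K (A ⧸ m.asIdeal)
  exact Algebra.IsSeparable.isSeparable K _

theorem Algebra.isSeparable_adjoin_of_isSeparable {K R : Type*} [Field K] [CommRing R]
    [Algebra K R] [FiniteDimensional K R] {s : Set R} (hs : ∀ x ∈ s, IsSeparable K x) :
    Algebra.IsSeparable K (Algebra.adjoin K s) := by
  have : Algebra.FormallyUnramified K (Algebra.adjoin K s) :=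
    .of_adjoin_eq_top_of_isSeparable Algebra.adjoin_adjoin_coe_preimage fun x hx =>
      (isSeparable_map_iff (Algebra.adjoin K s).val Subtype.val_injective).mp (hs _ hx)
  exact .of_formallyUnramified

/-- The set of all separable elements (elements whose minimal polynomial over `K` is
separable) of a 0-dimensional affine `K`-algebra `R` is a `K`-subalgebra of `R`. -/
theorem separable_elements_form_subalgebra {K R : Type*} [Field K] [CommRing R]
    [Algebra K R] [FiniteDimensional K R] :
    ∃ S : Subalgebra K R, ∀ a : R, a ∈ S ↔ (minpoly K a).Separable :=
  ⟨Algebra.adjoin K {x | IsSeparable K x}, fun a =>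
    ⟨fun ha => Subalgebra.isSeparable_iff.mp (Algebra.isSeparable_adjoin_of_isSeparable
      fun _ hx => hx) a ha, fun ha => Algebra.subset_adjoin ha⟩⟩
end

section
/- Let R be a 0-dimensional affine K-algebra such that K is quasi-perfect for R (i.e., for all a ∈ R the separable part of the minimal polynomial μ_a lies in K[z]). Then every element a ∈ R has a unique decomposition a = b + r with b a separable element of R and r in the Jacobson radical Rad(0) of R; in particular R = R^sep ⊕ Rad(0) as K-vector spaces. -/
/-!
The minimal polynomial `μ` of `a` has a separable factor `g` with `g(a)` nilpotent. Since `g` is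
separable, `g'(a)` is a unit, so Newton's method starting from `a` converges (in finitely many
steps) to a root `b` of `g` with `a - b` nilpotent; its minimal polynomial divides `g`, hence is
separable. For uniqueness, if `b, c` have separable minimal polynomials and `b - c` is nilpotent,
then `μ_b(c)` is nilpotent in the reduced ring `K[c]`, hence zero, so `b` and `c` are both roots of
`μ_b` nilpotently close to `b`, and the uniqueness part of Newton's lemma gives `b = c`. In a
zero-dimensional ring the Jacobson radical consists of the nilpotent elements.
-/

open Polynomial

theorem Polynomial.Separable.isUnit_aeval_derivative_of_isNilpotent {R S : Type*} [CommRing R]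
    [CommRing S] [Algebra R S] {P : R[X]} (hP : P.Separable) {x : S}
    (hnil : IsNilpotent (aeval x P)) : IsUnit (aeval x (derivative P)) := by
  obtain ⟨u, v, huv⟩ := hP
  have hsum : aeval x u * aeval x P + aeval x v * aeval x (derivative P) = 1 := by
    simpa only [map_add, map_mul, map_one] using congrArg (aeval x) huv
  have hunit : IsUnit (1 - aeval x u * aeval x P) :=
    IsNilpotent.isUnit_one_sub ((Commute.all _ _).isNilpotent_mul_left hnil)
  rw [← hsum, add_sub_cancel_left] at hunit
  exact isUnit_of_mul_isUnit_right hunit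

theorem aeval_eq_zero_of_isNilpotent_of_squarefree_minpoly {K S : Type*} [Field K] [CommRing S]
    [Algebra K S] {x : S} (hx : Squarefree (minpoly K x)) {p : K[X]}
    (hnil : IsNilpotent (aeval x p)) : aeval x p = 0 := by
  obtain ⟨n, hn⟩ := hnil
  exact minpoly.dvd_iff.mp (hx.isRadical n p (minpoly.dvd K x (by rw [map_pow, hn])))

section SeparableDecomposition

variable {K S : Type*} [Field K] [CommRing S] [Algebra K S]

theorem exists_separable_minpoly_isNilpotent_sub {g : K[X]} (hg : g.Separable) {a : S}
    (hnil : IsNilpotent (aeval a g)) :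
    ∃ b : S, IsNilpotent (a - b) ∧ (minpoly K b).Separable := by
  obtain ⟨b, ⟨hab, hb⟩, -⟩ := existsUnique_nilpotent_sub_and_aeval_eq_zero hnil
    (hg.isUnit_aeval_derivative_of_isNilpotent hnil)
  exact ⟨b, hab, hg.of_dvd (minpoly.dvd K b hb)⟩

theorem eq_of_separable_minpoly_of_isNilpotent_sub {b c : S} (hb : (minpoly K b).Separable)
    (hc : (minpoly K c).Separable) (hbc : IsNilpotent (b - c)) : b = c := by
  have hbroot : aeval b (minpoly K b) = 0 := minpoly.aeval K b
  have hcroot : aeval c (minpoly K b) = 0 := by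
    refine aeval_eq_zero_of_isNilpotent_of_squarefree_minpoly hc.squarefree ?_
    simpa only [hbroot, sub_zero] using isNilpotent_aeval_sub_of_isNilpotent_sub (minpoly K b)
      (by rwa [← isNilpotent_neg_iff, neg_sub] : IsNilpotent (c - b))
  have hnewton := existsUnique_nilpotent_sub_and_aeval_eq_zero (by simp [hbroot])
    (hb.isUnit_aeval_derivative_of_isNilpotent (x := b) (by simp [hbroot]))
  exact hnewton.unique ⟨by simp, hbroot⟩ ⟨hbc, hcroot⟩

end SeparableDecomposition

theorem mem_jacobson_bot_iff_isNilpotent {R : Type*} [CommRing R] [IsArtinianRing R] {x : R} :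
    x ∈ (⊥ : Ideal R).jacobson ↔ IsNilpotent x := by
  rw [IsArtinianRing.jacobson_eq_radical]
  exact mem_nilradical

/-- Let `R` be a 0-dimensional affine `K`-algebra such that `K` is quasi-perfect for `R`,
i.e. for every `a ∈ R` the separable part of the minimal polynomial `μ_a` already lies in
`K[z]` (here expressed as: there is a separable `g ∈ K[z]` with `g ∣ μ_a` and
`μ_a ∣ g ^ deg μ_a`). Then every `a ∈ R` has a unique decomposition `a = b + r` with `b`
a separable element of `R` and `r` in the Jacobson radical `Rad(0)` of `R`. -/
theorem unique_separable_nilpotent_decomposition {K R : Type*} [Field K] [CommRing R]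
    [Algebra K R] [FiniteDimensional K R]
    (hqp : ∀ a : R, ∃ g : Polynomial K, g.Separable ∧ g ∣ minpoly K a ∧
      minpoly K a ∣ g ^ (minpoly K a).natDegree)
    (a : R) :
    ∃! br : R × R, a = br.1 + br.2 ∧ (minpoly K br.1).Separable ∧
      br.2 ∈ (⊥ : Ideal R).jacobson := by
  have : IsArtinianRing R := isArtinian_of_tower K inferInstance
  obtain ⟨g, hg, -, hdvd⟩ := hqp a
  have hnil : IsNilpotent (aeval a g) :=
    ⟨_, by rw [← map_pow]; exact minpoly.dvd_iff.mp hdvd⟩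
  obtain ⟨b, hab, hb⟩ := exists_separable_minpoly_isNilpotent_sub hg hnil
  refine ⟨(b, a - b), ⟨(add_sub_cancel b a).symm, hb, mem_jacobson_bot_iff_isNilpotent.mpr hab⟩,
    ?_⟩
  rintro ⟨c, r⟩ ⟨rfl, hc, hr⟩
  have hbc : IsNilpotent (b - c) := by
    rw [show b - c = r - (c + r - b) by ring]
    exact (Commute.all _ _).isNilpotent_sub (mem_jacobson_bot_iff_isNilpotent.mp hr) hab
  obtain rfl := eq_of_separable_minpoly_of_isNilpotent_sub hb hc hbc
  simp
end

section
/- Let R be a 0-dimensional affine K-algebra such that K is quasi-perfect for R. Then the map φ : R^× → (1 + Rad(0)) × (R^sep)^× defined by r ↦ (r·(r^sep)^{-1}, r^sep) is a group isomorphism, where r^sep denotes the separable part of r. -/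
/-!
A nilpotent element whose minimal polynomial is separable, hence squarefree, is zero, so `R^sep`
is reduced. Consequently `sep a` is the only element `x ∈ R^sep` with `a - x` nilpotent, and this
uniqueness makes `sep` multiplicative and the identity on `R^sep`. On units, `sep` is therefore a
retraction of `Rˣ` onto `(R^sep)ˣ` whose kernel is `1 + Rad(0)`; in a commutative group such a
retraction splits the group as kernel × image.
-/

open Polynomial

theorem IsNilpotent.eq_zero_of_separable_minpoly {K R : Type*} [Field K] [CommRing R]
    [Algebra K R] {a : R} (hnil : IsNilpotent a) (hsep : (minpoly K a).Separable) : a = 0 := by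
  obtain ⟨n, hn⟩ := hnil
  rcases n.eq_zero_or_pos with rfl | hpos
  · exact eq_zero_of_zero_eq_one (by simpa using hn.symm) a
  have hX : minpoly K a ∣ X ^ n := minpoly.dvd_iff.mpr (by simp [hn])
  simpa using minpoly.dvd_iff.mp ((hsep.squarefree.dvd_pow_iff_dvd hpos.ne').mp hX)

theorem Subalgebra.isReduced_of_separable_minpoly {K R : Type*} [Field K] [CommRing R]
    [Algebra K R] (S : Subalgebra K R) (hS : ∀ a ∈ S, (minpoly K a).Separable) :
    IsReduced S :=
  (isReduced_iff S).mpr fun x hx =>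
    Subtype.ext ((hx.map S.val).eq_zero_of_separable_minpoly (hS x x.2))

structure IsSeparablePart {K R : Type*} [CommSemiring K] [CommRing R] [Algebra K R]
    (S : Subalgebra K R) (sep : R → R) : Prop where
  mem : ∀ a, sep a ∈ S
  sub_mem_nilradical : ∀ a, a - sep a ∈ nilradical R

namespace IsSeparablePart

variable {K R : Type*} [CommRing K] [CommRing R] [Algebra K R] {S : Subalgebra K R}
  [IsReduced S] {sep : R → R}

theorem eq_of_sub_mem_nilradical (h : IsSeparablePart S sep) {a x : R} (hx : x ∈ S)
    (hax : a - x ∈ nilradical R) : sep a = x := by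
  have hnil : IsNilpotent (sep a - x) := by
    rw [show sep a - x = (a - x) - (a - sep a) by ring]
    exact (nilradical R).sub_mem hax (h.sub_mem_nilradical a)
  have hnilS : IsNilpotent (⟨sep a - x, sub_mem (h.mem a) hx⟩ : S) :=
    (IsNilpotent.map_iff (f := S.val) Subtype.val_injective).mp hnil
  exact sub_eq_zero.mp (congrArg Subtype.val hnilS.eq_zero)

theorem map_of_mem (h : IsSeparablePart S sep) {x : R} (hx : x ∈ S) : sep x = x :=
  h.eq_of_sub_mem_nilradical hx (by simp)

theorem map_one (h : IsSeparablePart S sep) : sep 1 = 1 :=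
  h.map_of_mem S.one_mem

theorem map_mul (h : IsSeparablePart S sep) (a b : R) : sep (a * b) = sep a * sep b := by
  refine h.eq_of_sub_mem_nilradical (S.mul_mem (h.mem a) (h.mem b)) ?_
  rw [show a * b - sep a * sep b = a * (b - sep b) + sep b * (a - sep a) by ring]
  exact Ideal.add_mem _ (Ideal.mul_mem_left _ _ (h.sub_mem_nilradical b))
    (Ideal.mul_mem_left _ _ (h.sub_mem_nilradical a))

def toMonoidHom (h : IsSeparablePart S sep) : R →* S where
  toFun a := ⟨sep a, h.mem a⟩
  map_one' := Subtype.ext h.map_one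
  map_mul' a b := Subtype.ext (h.map_mul a b)

def unitsHom (h : IsSeparablePart S sep) : Rˣ →* Sˣ := Units.map h.toMonoidHom

theorem unitsHom_map_val (h : IsSeparablePart S sep) (t : Sˣ) :
    h.unitsHom (Units.map (S.val : S →* R) t) = t :=
  Units.ext (Subtype.ext (h.map_of_mem (t : S).2))

theorem unitsHom_eq_one (h : IsSeparablePart S sep) {u : Rˣ}
    (hu : (u : R) - 1 ∈ nilradical R) : h.unitsHom u = 1 :=
  Units.ext (Subtype.ext (h.eq_of_sub_mem_nilradical S.one_mem hu))

theorem val_div_sub_one_mem (h : IsSeparablePart S sep) (r : Rˣ) :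
    ((r / Units.map (S.val : S →* R) (h.unitsHom r) : Rˣ) : R) - 1 ∈ nilradical R := by
  set u := Units.map (S.val : S →* R) (h.unitsHom r)
  have hu : (u : R) = sep r := rfl
  rw [show ((r / u : Rˣ) : R) - 1 = (r - sep r) * ↑u⁻¹ by
    rw [sub_mul, ← hu, Units.mul_inv, div_eq_mul_inv, Units.val_mul]]
  exact Ideal.mul_mem_right _ _ (h.sub_mem_nilradical r)

variable (N : Subgroup Rˣ) (hN : ∀ u : Rˣ, u ∈ N ↔ (u : R) - 1 ∈ nilradical R)

def nilUnitsHom (h : IsSeparablePart S sep) : Rˣ →* N :=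
  (MonoidHom.id Rˣ / (Units.map (S.val : S →* R)).comp h.unitsHom).codRestrict N
    fun r => (hN _).mpr (h.val_div_sub_one_mem r)

theorem val_nilUnitsHom_mul (h : IsSeparablePart S sep) (r : Rˣ) :
    ((h.nilUnitsHom N hN r : Rˣ) : R) * sep r = r :=
  congrArg Units.val (div_mul_cancel r (Units.map (S.val : S →* R) (h.unitsHom r)))

def unitsMulEquiv (h : IsSeparablePart S sep) : Rˣ ≃* N × Sˣ :=
  MonoidHom.toMulEquiv ((h.nilUnitsHom N hN).prod h.unitsHom)
    (N.subtype.coprod (Units.map (S.val : S →* R)))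
    (by ext r; simp [nilUnitsHom])
    (by
      refine MonoidHom.ext fun ⟨n, t⟩ => ?_
      have hn : h.unitsHom n = 1 := h.unitsHom_eq_one ((hN n).mp n.2)
      simp [nilUnitsHom, hn, h.unitsHom_map_val])

end IsSeparablePart

theorem units_iso_one_add_rad_prod_sep_units_general {K R : Type*} [Field K] [CommRing R]
    [Algebra K R]
    (S : Subalgebra K R) (hS : ∀ a : R, a ∈ S ↔ (minpoly K a).Separable)
    (sep : R → R) (hsep₁ : ∀ a : R, sep a ∈ S) (hsep₂ : ∀ a : R, a - sep a ∈ nilradical R)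
    (N : Subgroup Rˣ) (hN : ∀ u : Rˣ, u ∈ N ↔ ((u : R) - 1) ∈ nilradical R) :
    ∃ φ : Rˣ ≃* N × Sˣ,
      ∀ r : Rˣ, ((((φ r).2 : S) : R) = sep (r : R)) ∧
        ((((φ r).1 : Rˣ) : R) * sep (r : R) = (r : R)) := by
  have : IsReduced S := S.isReduced_of_separable_minpoly fun a => (hS a).mp
  have h : IsSeparablePart S sep := ⟨hsep₁, hsep₂⟩
  exact ⟨h.unitsMulEquiv N hN, fun r => ⟨rfl, h.val_nilUnitsHom_mul N hN r⟩⟩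

/-- Let `R` be a 0-dimensional affine `K`-algebra with `K` quasi-perfect for `R`.
Let `S = R^sep` be the subalgebra of separable elements, `sep : R → R` the map sending
each element to its separable part (so `a - sep a` lies in the nilradical), and `N` the
subgroup `1 + Rad(0)` of `Rˣ`. Then the map `φ : Rˣ → (1 + Rad(0)) × (R^sep)ˣ` given by
`r ↦ (r·(r^sep)⁻¹, r^sep)` is a group isomorphism. -/
theorem units_iso_one_add_rad_prod_sep_units {K R : Type*} [Field K] [CommRing R]
    [Algebra K R] [FiniteDimensional K R]
    (hqp : ∀ a : R, ∃ g : Polynomial K, g.Separable ∧ g ∣ minpoly K a ∧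
      minpoly K a ∣ g ^ (minpoly K a).natDegree)
    (S : Subalgebra K R) (hS : ∀ a : R, a ∈ S ↔ (minpoly K a).Separable)
    (sep : R → R) (hsep₁ : ∀ a : R, sep a ∈ S) (hsep₂ : ∀ a : R, a - sep a ∈ nilradical R)
    (N : Subgroup Rˣ) (hN : ∀ u : Rˣ, u ∈ N ↔ ((u : R) - 1) ∈ nilradical R) :
    ∃ φ : Rˣ ≃* N × Sˣ,
      ∀ r : Rˣ, ((((φ r).2 : S) : R) = sep (r : R)) ∧
        ((((φ r).1 : Rˣ) : R) * sep (r : R) = (r : R)) :=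
  units_iso_one_add_rad_prod_sep_units_general S hS sep hsep₁ hsep₂ N hN
end

section
/- If r ∈ R^× with nilpotent part r^nil satisfying (r^nil)^m = 0, then r·(r^sep)^{-1} = Σ_{i=0}^{m-1} r^{-i} (r^nil)^i. -/
/-- Let `R` be a 0-dimensional affine `K`-algebra with `K` quasi-perfect for `R`, and let
`r ∈ Rˣ` with decomposition `r = r^sep + r^nil` into its (invertible) separable part `s`
and its nilpotent part `n` satisfying `n ^ m = 0`. Then
`r · (r^sep)⁻¹ = Σ_{i=0}^{m-1} r^{-i} (r^nil)^i`. -/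
theorem unit_mul_sep_inv_eq_sum {K R : Type*} [Field K] [CommRing R] [Algebra K R]
    [FiniteDimensional K R]
    (r s : Rˣ) (n : R) (m : ℕ)
    (hdec : (r : R) = (s : R) + n)
    (hs : (minpoly K (s : R)).Separable)
    (hn : n ∈ nilradical R) (hm : n ^ m = 0) :
    (r : R) * ((s⁻¹ : Rˣ) : R) = ∑ i ∈ Finset.range m, ((r⁻¹ : Rˣ) : R) ^ i * n ^ i := by
  set x : R := ((r⁻¹ : Rˣ) : R) * n with hx
  have hsum : ∑ i ∈ Finset.range m, ((r⁻¹ : Rˣ) : R) ^ i * n ^ i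
      = ∑ i ∈ Finset.range m, x ^ i := by
    simp [hx, mul_pow]
  have hxm : x ^ m = 0 := by simp [hx, mul_pow, hm]
  have hgeom : (∑ i ∈ Finset.range m, x ^ i) * (1 - x) = 1 := by
    have h := geom_sum_mul x m
    have : (∑ i ∈ Finset.range m, x ^ i) * (1 - x) = 1 - x ^ m := by ring_nf; linear_combination -h
    rw [this, hxm, sub_zero]
  -- s * r⁻¹ = 1 - x
  have hsr : (s : R) * ((r⁻¹ : Rˣ) : R) = 1 - x := by
    have hs' : (s : R) = (r : R) - n := by rw [hdec]; ring
    rw [hs', hx, sub_mul]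
    have : (r : R) * ((r⁻¹ : Rˣ) : R) = 1 := by
      rw [← Units.val_mul, mul_inv_cancel, Units.val_one]
    rw [this]; ring
  -- r * s⁻¹ is the inverse of s * r⁻¹
  have hrs : ((r : R) * ((s⁻¹ : Rˣ) : R)) * ((s : R) * ((r⁻¹ : Rˣ) : R)) = 1 := by
    have h1 : (r : R) * ((r⁻¹ : Rˣ) : R) = 1 := by
      rw [← Units.val_mul, mul_inv_cancel, Units.val_one]
    have h2 : ((s⁻¹ : Rˣ) : R) * (s : R) = 1 := by
      rw [← Units.val_mul, inv_mul_cancel, Units.val_one]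
    calc ((r : R) * ((s⁻¹ : Rˣ) : R)) * ((s : R) * ((r⁻¹ : Rˣ) : R))
        = ((r : R) * ((r⁻¹ : Rˣ) : R)) * (((s⁻¹ : Rˣ) : R) * (s : R)) := by ring
      _ = 1 := by rw [h1, h2, one_mul]
  rw [hsum]
  calc (r : R) * ((s⁻¹ : Rˣ) : R)
      = (r : R) * ((s⁻¹ : Rˣ) : R) * ((∑ i ∈ Finset.range m, x ^ i) * (1 - x)) := by
        rw [hgeom, mul_one]
    _ = ((r : R) * ((s⁻¹ : Rˣ) : R) * ((s : R) * ((r⁻¹ : Rˣ) : R))) *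
          (∑ i ∈ Finset.range m, x ^ i) := by rw [hsr]; ring
    _ = ∑ i ∈ Finset.range m, x ^ i := by rw [hrs, one_mul]
end

section
/- Let P = K[x_1,...,x_n], f_1,...,f_k ∈ P, and I ⊊ P an ideal such that the residue classes of f_1,...,f_k are non-zerodivisors in P/I. Let G be a subgroup of K^×. Then the set Λ = {a ∈ ℤ^k ∣ F^{a⁺} − g·F^{a⁻} ∈ I for some g ∈ G} is a subgroup of ℤ^k, and the map ρ : Λ → G sending a to the (unique) such g is a well-defined group homomorphism. -/
open MvPolynomial

private lemma unit_lattice_aux_regprod {K : Type*} [Field K] {n k : ℕ}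
    (f : Fin k → MvPolynomial (Fin n) K) (I : Ideal (MvPolynomial (Fin n) K))
    (hreg : ∀ i : Fin k, ∀ g : MvPolynomial (Fin n) K, g * f i ∈ I → g ∈ I)
    (e : Fin k → ℕ) :
    ∀ g : MvPolynomial (Fin n) K, g * ∏ i, f i ^ e i ∈ I → g ∈ I := by
  have hpow : ∀ i : Fin k, ∀ m : ℕ, ∀ g : MvPolynomial (Fin n) K,
      g * f i ^ m ∈ I → g ∈ I := by
    intro i m
    induction m with
    | zero => intro g hg; simpa using hg
    | succ m ih =>
      intro g hg
      rw [pow_succ, ← mul_assoc] at hg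
      exact ih _ (hreg i _ hg)
  exact Finset.prod_induction (fun i => f i ^ e i)
    (fun p => ∀ g : MvPolynomial (Fin n) K, g * p ∈ I → g ∈ I)
    (fun x y hx hy g hg => hx g (hy (g * x) (by rwa [mul_assoc])))
    (fun g hg => by simpa using hg)
    (fun i _ => hpow i (e i))

private lemma unit_lattice_aux_key {K : Type*} [Field K] {n k : ℕ}
    (f : Fin k → MvPolynomial (Fin n) K) (x y z : Fin k → ℕ)
    (h : ∀ i, x i = y i + z i) :
    ∏ i, f i ^ x i = (∏ i, f i ^ y i) * ∏ i, f i ^ z i := by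
  rw [← Finset.prod_mul_distrib]
  exact Finset.prod_congr rfl fun i _ => by rw [h i, pow_add]

/-- Let `P = K[x_1,...,x_n]`, `f_1,...,f_k ∈ P` and `I ⊊ P` an ideal such that the
residue classes of the `f_i` are non-zerodivisors modulo `I`, and let `G` be a subgroup
of `K^×`. Then the unit lattice
`Λ = {a ∈ ℤ^k ∣ F^{a⁺} − g·F^{a⁻} ∈ I for some g ∈ G}` is a subgroup of `ℤ^k`, and the
associated character `ρ : Λ → G`, sending `a` to the (unique) such `g`, is a
well-defined group homomorphism. -/
theorem unit_lattice_subgroup_and_character {K : Type*} [Field K] {n k : ℕ}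
    (f : Fin k → MvPolynomial (Fin n) K)
    (I : Ideal (MvPolynomial (Fin n) K)) (hI : I ≠ ⊤)
    (hreg : ∀ i : Fin k, ∀ g : MvPolynomial (Fin n) K, g * f i ∈ I → g ∈ I)
    (G : Subgroup Kˣ) :
    ∃ H : AddSubgroup (Fin k → ℤ),
      (∀ a : Fin k → ℤ, a ∈ H ↔ ∃ g ∈ G,
        (∏ i, f i ^ (a i).toNat) -
          MvPolynomial.C ((g : Kˣ) : K) * ∏ i, f i ^ (-(a i)).toNat ∈ I) ∧
      -- uniqueness of `g` (well-definedness of the character)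
      (∀ a : Fin k → ℤ, ∀ g g' : Kˣ,
        ((∏ i, f i ^ (a i).toNat) -
          MvPolynomial.C (g : K) * ∏ i, f i ^ (-(a i)).toNat ∈ I) →
        ((∏ i, f i ^ (a i).toNat) -
          MvPolynomial.C (g' : K) * ∏ i, f i ^ (-(a i)).toNat ∈ I) → g = g') ∧
      ∃ ρ : H →+ Additive Kˣ,
        ∀ a : H, Additive.toMul (ρ a) ∈ G ∧
          (∏ i, f i ^ ((a : Fin k → ℤ) i).toNat) -
            MvPolynomial.C ((Additive.toMul (ρ a) : Kˣ) : K) *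
              ∏ i, f i ^ (-((a : Fin k → ℤ) i)).toNat ∈ I := by
  classical
  set Pos : (Fin k → ℤ) → MvPolynomial (Fin n) K :=
    fun a => ∏ i, f i ^ (a i).toNat with hPos
  set cond : (Fin k → ℤ) → K → Prop :=
    fun a g => Pos a - MvPolynomial.C g * Pos (-a) ∈ I with hcond
  -- uniqueness
  have uniq : ∀ (a : Fin k → ℤ) (g g' : K), cond a g → cond a g' → g = g' := by
    intro a g g' hg hg'
    have e : MvPolynomial.C (g - g') * Pos (-a)
        = (Pos a - MvPolynomial.C g' * Pos (-a)) - (Pos a - MvPolynomial.C g * Pos (-a)) := by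
      rw [map_sub]; ring
    have hd : MvPolynomial.C (g - g') * Pos (-a) ∈ I := by
      rw [e]; exact I.sub_mem hg' hg
    have hC : MvPolynomial.C (g - g') ∈ I :=
      unit_lattice_aux_regprod f I hreg _ _ hd
    by_contra hne
    have hgg : g - g' ≠ 0 := sub_ne_zero.mpr hne
    apply hI
    rw [Ideal.eq_top_iff_one]
    have h1 : MvPolynomial.C (g - g') * MvPolynomial.C (g - g')⁻¹ ∈ I := I.mul_mem_right _ hC
    rw [← map_mul, mul_inv_cancel₀ hgg, map_one] at h1
    exact h1
  -- additivity of the condition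
  have hadd : ∀ (a b : Fin k → ℤ) (g h : K), cond a g → cond b h → cond (a + b) (g * h) := by
    intro a b g h hg hh
    set c : Fin k → ℕ :=
      fun i => min ((a i).toNat + (b i).toNat) ((-(a i)).toNat + (-(b i)).toNat) with hc
    have e1 : Pos a * Pos b = Pos (a + b) * ∏ i, f i ^ c i := by
      rw [hPos]
      rw [← unit_lattice_aux_key f (fun i => (a i).toNat + (b i).toNat) _ _ (fun i => rfl)]
      exact unit_lattice_aux_key f _ (fun i => ((a + b) i).toNat) c
        (fun i => by simp only [Pi.add_apply, hc]; omega)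
    have e2 : Pos (-a) * Pos (-b) = Pos (-(a + b)) * ∏ i, f i ^ c i := by
      rw [hPos]
      rw [← unit_lattice_aux_key f (fun i => ((-a) i).toNat + ((-b) i).toNat) _ _ (fun i => rfl)]
      exact unit_lattice_aux_key f _ (fun i => ((-(a + b)) i).toNat) c
        (fun i => by simp only [Pi.neg_apply, Pi.add_apply, hc]; omega)
    have step : Pos a * Pos b - MvPolynomial.C (g * h) * (Pos (-a) * Pos (-b)) ∈ I := by
      have m1 : (Pos a - MvPolynomial.C g * Pos (-a)) * Pos b ∈ I := I.mul_mem_right _ hg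
      have m2 : (MvPolynomial.C g * Pos (-a)) * (Pos b - MvPolynomial.C h * Pos (-b)) ∈ I :=
        I.mul_mem_left _ hh
      have e : Pos a * Pos b - MvPolynomial.C (g * h) * (Pos (-a) * Pos (-b))
          = (Pos a - MvPolynomial.C g * Pos (-a)) * Pos b
            + (MvPolynomial.C g * Pos (-a)) * (Pos b - MvPolynomial.C h * Pos (-b)) := by
        rw [map_mul]; ring
      rw [e]; exact I.add_mem m1 m2
    have step2 : (Pos (a + b) - MvPolynomial.C (g * h) * Pos (-(a + b))) *
        (∏ i, f i ^ c i) ∈ I := by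
      have e : (Pos (a + b) - MvPolynomial.C (g * h) * Pos (-(a + b))) * (∏ i, f i ^ c i)
          = Pos a * Pos b - MvPolynomial.C (g * h) * (Pos (-a) * Pos (-b)) := by
        rw [e1, e2]; ring
      rw [e]; exact step
    exact unit_lattice_aux_regprod f I hreg _ _ step2
  -- negation
  have hneg : ∀ (a : Fin k → ℤ) (g : Kˣ), cond a ((g : Kˣ) : K) → cond (-a) ((g⁻¹ : Kˣ) : K) := by
    intro a g hg
    have hmul : MvPolynomial.C ((g⁻¹ : Kˣ) : K) *
        (Pos a - MvPolynomial.C ((g : Kˣ) : K) * Pos (-a)) ∈ I := I.mul_mem_left _ hg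
    have hu : MvPolynomial.C ((g⁻¹ : Kˣ) : K) * MvPolynomial.C ((g : Kˣ) : K)
        = (1 : MvPolynomial (Fin n) K) := by
      rw [← map_mul]
      norm_num
    have e : Pos (-a) - MvPolynomial.C ((g⁻¹ : Kˣ) : K) * Pos (-(-a))
        = -(MvPolynomial.C ((g⁻¹ : Kˣ) : K) *
            (Pos a - MvPolynomial.C ((g : Kˣ) : K) * Pos (-a))) := by
      rw [neg_neg]
      linear_combination (-(Pos (-a))) * hu
    show Pos (-a) - MvPolynomial.C ((g⁻¹ : Kˣ) : K) * Pos (-(-a)) ∈ I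
    rw [e]; exact I.neg_mem hmul
  refine ⟨{
    carrier := {a | ∃ g ∈ G, cond a ((g : Kˣ) : K)}
    zero_mem' := ⟨1, G.one_mem, by simp [hcond, hPos]⟩
    add_mem' := by
      rintro a b ⟨g, hgG, hg⟩ ⟨h, hhG, hh⟩
      exact ⟨g * h, G.mul_mem hgG hhG, hadd a b _ _ hg hh⟩
    neg_mem' := by
      rintro a ⟨g, hgG, hg⟩
      exact ⟨g⁻¹, G.inv_mem hgG, hneg a g hg⟩ }, ?_, ?_, ?_⟩
  · intro a; rfl
  · intro a g g' hg hg'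
    exact Units.ext (uniq a _ _ hg hg')
  · -- the character
    set H : AddSubgroup (Fin k → ℤ) :=
      { carrier := {a | ∃ g ∈ G, cond a ((g : Kˣ) : K)}
        zero_mem' := ⟨1, G.one_mem, by simp [hcond, hPos]⟩
        add_mem' := by
          rintro a b ⟨g, hgG, hg⟩ ⟨h, hhG, hh⟩
          exact ⟨g * h, G.mul_mem hgG hhG, hadd a b _ _ hg hh⟩
        neg_mem' := by
          rintro a ⟨g, hgG, hg⟩
          exact ⟨g⁻¹, G.inv_mem hgG, hneg a g hg⟩ } with hH
    have hmem : ∀ a : H, ∃ g : Kˣ, g ∈ G ∧ cond (a : Fin k → ℤ) ((g : Kˣ) : K) := by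
      rintro ⟨a, g, hgG, hg⟩
      exact ⟨g, hgG, hg⟩
    let φ : H → Kˣ := fun a => (hmem a).choose
    have hφG : ∀ a : H, φ a ∈ G := fun a => (hmem a).choose_spec.1
    have hφc : ∀ a : H, cond (a : Fin k → ℤ) ((φ a : Kˣ) : K) :=
      fun a => (hmem a).choose_spec.2
    have hφadd : ∀ a b : H, φ (a + b) = φ a * φ b := by
      intro a b
      have h1 : cond ((a : Fin k → ℤ) + (b : Fin k → ℤ)) ((φ a : Kˣ) * (φ b : Kˣ) : K) :=
        hadd _ _ _ _ (hφc a) (hφc b)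
      have h2 : cond ((((a + b : H) : Fin k → ℤ))) ((φ (a + b) : Kˣ) : K) := hφc (a + b)
      rw [AddSubgroup.coe_add] at h2
      exact Units.ext (uniq _ _ _ h2 h1)
    refine ⟨AddMonoidHom.mk' (fun a => Additive.ofMul (φ a)) ?_, ?_⟩
    · intro a b
      exact congrArg Additive.ofMul (hφadd a b)
    · intro a
      exact ⟨hφG a, hφc a⟩
end

section
/- Let I ⊆ K[x_1,...,x_n] be an ideal and f ∈ K[x_1,...,x_n] such that I : ⟨f⟩^∞ = I : ⟨f^m⟩ for some m > 0. Then I = (I : ⟨f^m⟩) ∩ (I + ⟨f^m⟩). -/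
/-- Let `I ⊆ K[x_1,...,x_n]` be an ideal and `f` a polynomial such that
`I : ⟨f⟩^∞ = I : ⟨f^m⟩` for some `m > 0`. Then `I = (I : ⟨f^m⟩) ∩ (I + ⟨f^m⟩)`. -/
theorem ideal_eq_colon_inter_sup {K : Type*} [Field K] {n : ℕ}
    (I : Ideal (MvPolynomial (Fin n) K)) (f : MvPolynomial (Fin n) K)
    (m : ℕ) (hm : 0 < m)
    (hsat : ∀ g : MvPolynomial (Fin n) K, (∃ l : ℕ, g * f ^ l ∈ I) ↔ g * f ^ m ∈ I) :
    I = Submodule.colon I (Ideal.span {f ^ m}) ⊓ (I ⊔ Ideal.span {f ^ m}) := by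
  apply le_antisymm
  · refine le_inf ?_ le_sup_left
    intro g hg
    rw [Submodule.mem_colon]
    intro p hp
    obtain ⟨c, rfl⟩ := Ideal.mem_span_singleton'.mp hp
    simpa [smul_eq_mul, mul_comm, mul_assoc, mul_left_comm] using I.mul_mem_left (c * f ^ m) hg
  · rintro g ⟨hg1, hg2⟩
    rw [SetLike.mem_coe, Submodule.mem_colon] at hg1
    rw [SetLike.mem_coe] at hg2
    have hgf : g * f ^ m ∈ I := by
      simpa [smul_eq_mul] using hg1 (f ^ m) (Ideal.subset_span rfl)
    obtain ⟨a, ha, b, hb, rfl⟩ := Submodule.mem_sup.mp hg2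
    obtain ⟨c, rfl⟩ := Ideal.mem_span_singleton'.mp hb
    have hc : c * f ^ m ∈ I := by
      refine (hsat c).mp ⟨2 * m, ?_⟩
      have : c * f ^ (2 * m) = (a + c * f ^ m) * f ^ m - a * f ^ m := by ring
      rw [this]
      exact I.sub_mem hgf (I.mul_mem_right _ ha)
    exact I.add_mem ha hc
end
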